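/- Fix g ∈ ℓ², s₁ ≥ 0, s₂ ≤ 0, β > 0, and let (α_n) be an increasing positive sequence with α_n → ∞. For each n let (u_n, v_n) be the unique minimizer of the decomposition functional I_{α_n}(u,v) := ½|u|_{s₁}² + (α_n/2)‖u + v − g‖² + (β/2)|v|_{s₂}². Then the sequence (u_n, v_n) is bounded in ℓ² × ℓ², and there is a subsequence along which u_n converges weakly in ℓ² to u₀ and v_n converges weakly to g − u₀, where u₀ is the unique minimizer of Ĩ(u) := ½|u|_{s₁}² + (β/2)|u − g|_{s₂}² over sequences u ∈ ℓ² with |u|_{s₁} < ∞. -/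

import Mathlib

open scoped BigOperators
open Filter

noncomputable section

/-- Index set `ℤ^d \ {0}` of nonzero frequencies. -/
abbrev K (d : ℕ) : Type := {k : Fin d → ℤ // k ≠ 0}

/-- Euclidean norm `|k|` of a frequency `k ∈ ℤ^d \ {0}`. -/
noncomputable def nrm {d : ℕ} (k : K d) : ℝ := Real.sqrt (∑ i : Fin d, ((k.1 i : ℝ)) ^ 2)

/-- Squared fractional Sobolev seminorm `|u|_s² = Σ_k |k|^{2s} |u_k|²`. -/
noncomputable def HnormSq {d : ℕ} (s : ℝ) (u : K d → ℂ) : ℝ :=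
  ∑' k : K d, nrm k ^ (2 * s) * ‖u k‖ ^ 2

/-- `u ∈ ℓ²`, i.e. `‖u‖ = |u|_0 < ∞`. -/
def MemL2 {d : ℕ} (u : K d → ℂ) : Prop := Summable fun k : K d => ‖u k‖ ^ 2

/-- `|u|_s < ∞`. -/
def MemHs {d : ℕ} (s : ℝ) (u : K d → ℂ) : Prop :=
  Summable fun k : K d => nrm k ^ (2 * s) * ‖u k‖ ^ 2

/-!
Both functionals decouple over the modes `k`. Perturbing a minimizer of `I_α` in a single mode
shows that `(u_k, v_k)` minimizes a positive definite quadratic form in two complex variables, so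
with `a = |k|^{2s₁}` and `c = β|k|^{2s₂}` one gets explicitly
`u_k = αc/(ac + αa + αc) · g_k` and `v_k = αa/(ac + αa + αc) · g_k`.
These coefficients lie in `[0, 1]`, which bounds `u_n` and `v_n` by `g` mode by mode, and tend to
`c/(a + c)` and `a/(a + c)` as `α → ∞`. Dominated convergence then gives weak convergence of the
whole sequence to `u₀ = c/(a + c) · g` and `g - u₀`, and completing the square mode by mode shows
that `u₀` is the unique minimizer of `Ĩ`.
-/

open Topology

lemma one_le_nrm {d : ℕ} (k : K d) : 1 ≤ nrm k := by
  obtain ⟨i, hi⟩ := Function.ne_iff.mp k.2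
  have h1 : (1 : ℝ) ≤ (k.1 i : ℝ) ^ 2 := by
    rw [one_le_sq_iff_one_le_abs]; exact_mod_cast Int.one_le_abs hi
  rw [nrm, Real.one_le_sqrt]
  exact h1.trans (Finset.single_le_sum (fun j _ => sq_nonneg ((k.1 j : ℝ))) (Finset.mem_univ i))

lemma rpow_nrm_pos {d : ℕ} (k : K d) (s : ℝ) : 0 < nrm k ^ s :=
  Real.rpow_pos_of_pos (zero_lt_one.trans_le (one_le_nrm k)) s

lemma mul_rpow_nrm_nonneg {d : ℕ} {β : ℝ} (hβ : 0 ≤ β) (k : K d) (s : ℝ) : 0 ≤ β * nrm k ^ s :=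
  mul_nonneg hβ (rpow_nrm_pos k s).le

lemma rpow_nrm_add_mul_rpow_nrm_pos {d : ℕ} {β : ℝ} (hβ : 0 ≤ β) (k : K d) (s₁ s₂ : ℝ) :
    0 < nrm k ^ s₁ + β * nrm k ^ s₂ :=
  add_pos_of_pos_of_nonneg (rpow_nrm_pos k s₁) (mul_rpow_nrm_nonneg hβ k s₂)

lemma rpow_nrm_le_one {d : ℕ} (k : K d) {s : ℝ} (hs : s ≤ 0) : nrm k ^ s ≤ 1 :=
  Real.rpow_le_one_of_one_le_of_nonpos (one_le_nrm k) hs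

lemma memL2_iff_memℓp {d : ℕ} {u : K d → ℂ} : MemL2 u ↔ Memℓp u 2 := by
  rw [memℓp_gen_iff (by norm_num)]
  simp [MemL2]

lemma MemL2.add {d : ℕ} {u v : K d → ℂ} (hu : MemL2 u) (hv : MemL2 v) : MemL2 (u + v) :=
  memL2_iff_memℓp.2 ((memL2_iff_memℓp.1 hu).add (memL2_iff_memℓp.1 hv))

lemma MemL2.sub {d : ℕ} {u v : K d → ℂ} (hu : MemL2 u) (hv : MemL2 v) : MemL2 (u - v) :=
  memL2_iff_memℓp.2 ((memL2_iff_memℓp.1 hu).sub (memL2_iff_memℓp.1 hv))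

lemma MemL2.memHs {d : ℕ} {u : K d → ℂ} (hu : MemL2 u) {s : ℝ} (hs : s ≤ 0) : MemHs s u :=
  .of_nonneg_of_le (fun k => by have := rpow_nrm_pos k (2 * s); positivity)
    (fun k => mul_le_of_le_one_left (sq_nonneg _) (rpow_nrm_le_one k (by linarith))) hu

lemma MemL2.of_norm_le {d : ℕ} {u g : K d → ℂ} (hg : MemL2 g) (h : ∀ k, ‖u k‖ ≤ ‖g k‖) : MemL2 u :=
  .of_nonneg_of_le (fun _ => sq_nonneg _) (fun k => pow_le_pow_left₀ (norm_nonneg _) (h k) 2) hg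

lemma tsum_sq_norm_le_of_norm_le {d : ℕ} {u g : K d → ℂ} (hg : MemL2 g) (h : ∀ k, ‖u k‖ ≤ ‖g k‖) :
    ∑' k, ‖u k‖ ^ 2 ≤ ∑' k, ‖g k‖ ^ 2 :=
  (hg.of_norm_le h).tsum_le_tsum (fun k => pow_le_pow_left₀ (norm_nonneg _) (h k) 2) hg

lemma norm_ofReal_mul_le {x : ℝ} (h0 : 0 ≤ x) (h1 : x ≤ 1) (z : ℂ) : ‖(x : ℂ) * z‖ ≤ ‖z‖ := by
  rw [norm_mul, Complex.norm_of_nonneg h0]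
  exact mul_le_of_le_one_left (norm_nonneg z) h1

section FunctionUpdate

variable {ι α β : Type*} [DecidableEq ι]

lemma Summable.apply_update {φ : ι → α → ℝ} {x : ι → α} (hs : Summable fun k => φ k (x k))
    (i : ι) (t : α) : Summable fun k => φ k (Function.update x i t k) := by
  rw [show (fun k => φ k (Function.update x i t k)) = Function.update (fun k => φ k (x k)) i (φ i t)
    from funext (Function.apply_update φ x i t)]
  exact hs.update i (φ i t)

lemma le_of_tsum_le_tsum_update₂ {φ : ι → α → β → ℝ} {x : ι → α} {y : ι → β}
    (hs : Summable fun k => φ k (x k) (y k)) (i : ι) (t : α) (r : β)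
    (h : ∑' k, φ k (x k) (y k) ≤ ∑' k, φ k (Function.update x i t k) (Function.update y i r k)) :
    φ i (x i) (y i) ≤ φ i t r := by
  simp only [Function.apply_update₂ φ, (hs.hasSum.update i (φ i t r)).tsum_eq] at h
  linarith

end FunctionUpdate

lemma MemL2.update {d : ℕ} {u : K d → ℂ} (hu : MemL2 u) (i : K d) (t : ℂ) :
    MemL2 (Function.update u i t) :=
  Summable.apply_update (φ := fun _ z => ‖z‖ ^ 2) hu i t

lemma MemHs.update {d : ℕ} {s : ℝ} {u : K d → ℂ} (hu : MemHs s u) (i : K d) (t : ℂ) :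
    MemHs s (Function.update u i t) :=
  Summable.apply_update (φ := fun k z => nrm k ^ (2 * s) * ‖z‖ ^ 2) hu i t

/- Twice the contributions of a single mode `k` to `I_α` and to `Ĩ`, where `a = |k|^{2s₁}`,
`c = β|k|^{2s₂}` and `G = g_k`. The minimizing `u_k` and `v_k` of the former are
`decompCoeff a c α * G` and `decompCoeff c a α * G`. -/
def decompEnergy (a c α : ℝ) (G t r : ℂ) : ℝ :=
  a * ‖t‖ ^ 2 + α * ‖t + r - G‖ ^ 2 + c * ‖r‖ ^ 2

def limitEnergy (a c : ℝ) (G z : ℂ) : ℝ :=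
  a * ‖z‖ ^ 2 + c * ‖z - G‖ ^ 2

def decompCoeff (a c α : ℝ) : ℝ := α * c / (a * c + α * a + α * c)

def limitCoeff (a c : ℝ) : ℝ := c / (a + c)

lemma decompEnergy_eq_add {a c α : ℝ} (hD : a * c + α * a + α * c ≠ 0) (G t r : ℂ) :
    decompEnergy a c α G t r =
      decompEnergy a c α G (decompCoeff a c α * G) (decompCoeff c a α * G) +
        decompEnergy a c α 0 (t - decompCoeff a c α * G) (r - decompCoeff c a α * G) := by
  simp only [decompCoeff, show c * a + α * c + α * a = a * c + α * a + α * c by ring]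
  generalize hDdef : a * c + α * a + α * c = D at hD ⊢
  simp only [decompEnergy, Complex.sq_norm, Complex.normSq_apply, Complex.sub_re,
    Complex.sub_im, Complex.add_re, Complex.add_im, Complex.mul_re, Complex.mul_im,
    Complex.ofReal_re, Complex.ofReal_im, Complex.zero_re, Complex.zero_im]
  field_simp
  rw [← hDdef]
  ring

lemma limitEnergy_eq_add {a c : ℝ} (hac : a + c ≠ 0) (G z : ℂ) :
    limitEnergy a c G z = limitEnergy a c G (limitCoeff a c * G) +
      (a + c) * ‖z - limitCoeff a c * G‖ ^ 2 := by
  simp only [limitEnergy, limitCoeff, Complex.sq_norm, Complex.normSq_apply, Complex.sub_re,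
    Complex.sub_im, Complex.mul_re, Complex.mul_im, Complex.ofReal_re, Complex.ofReal_im]
  field_simp
  ring

lemma eq_decompCoeff_mul_of_forall_le {a c α : ℝ} (ha : 0 < a) (hc : 0 < c) (hα : 0 ≤ α)
    {G t r : ℂ} (h : ∀ t' r', decompEnergy a c α G t r ≤ decompEnergy a c α G t' r') :
    t = decompCoeff a c α * G ∧ r = decompCoeff c a α * G := by
  have hD : 0 < a * c + α * a + α * c := by positivity
  have hmin := h (decompCoeff a c α * G) (decompCoeff c a α * G)
  rw [decompEnergy_eq_add hD.ne'] at hmin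
  set x := t - decompCoeff a c α * G
  set y := r - decompCoeff c a α * G
  have hxy : a * ‖x‖ ^ 2 + c * ‖y‖ ^ 2 ≤ 0 := by
    simp only [decompEnergy] at hmin
    nlinarith [sq_nonneg ‖x + y - 0‖]
  have hx : ‖x‖ ^ 2 = 0 := by nlinarith [sq_nonneg ‖x‖, sq_nonneg ‖y‖]
  have hy : ‖y‖ ^ 2 = 0 := by nlinarith [sq_nonneg ‖x‖, sq_nonneg ‖y‖]
  simp only [sq_eq_zero_iff, norm_eq_zero, sub_eq_zero, x, y] at hx hy
  exact ⟨hx, hy⟩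

lemma limitEnergy_limitCoeff_le {a c : ℝ} (hac : 0 < a + c) (G z : ℂ) :
    limitEnergy a c G (limitCoeff a c * G) ≤ limitEnergy a c G z := by
  rw [limitEnergy_eq_add hac.ne' G z]
  exact le_add_of_nonneg_right (mul_nonneg hac.le (sq_nonneg _))

lemma limitEnergy_limitCoeff_lt {a c : ℝ} (hac : 0 < a + c) (G : ℂ) {z : ℂ}
    (hz : z ≠ limitCoeff a c * G) :
    limitEnergy a c G (limitCoeff a c * G) < limitEnergy a c G z := by
  rw [limitEnergy_eq_add hac.ne' G z]
  exact lt_add_of_pos_right _ (mul_pos hac (pow_pos (norm_pos_iff.2 (sub_ne_zero.2 hz)) 2))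

lemma decompCoeff_nonneg {a c α : ℝ} (ha : 0 ≤ a) (hc : 0 ≤ c) (hα : 0 ≤ α) :
    0 ≤ decompCoeff a c α := by
  unfold decompCoeff; positivity

lemma decompCoeff_le_one {a c α : ℝ} (ha : 0 ≤ a) (hc : 0 ≤ c) (hα : 0 ≤ α) :
    decompCoeff a c α ≤ 1 :=
  div_le_one_of_le₀ (by nlinarith [mul_nonneg ha hc, mul_nonneg hα ha]) (by positivity)

lemma limitCoeff_nonneg {a c : ℝ} (ha : 0 ≤ a) (hc : 0 ≤ c) : 0 ≤ limitCoeff a c := by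
  unfold limitCoeff; positivity

lemma limitCoeff_le_one {a c : ℝ} (ha : 0 ≤ a) (hc : 0 ≤ c) : limitCoeff a c ≤ 1 :=
  div_le_one_of_le₀ (by linarith) (by positivity)

lemma mul_limitCoeff_sq_le {a c : ℝ} (ha : 0 < a) (hc : 0 ≤ c) : a * limitCoeff a c ^ 2 ≤ c := by
  unfold limitCoeff
  rw [div_pow, mul_div_assoc', div_le_iff₀ (by positivity)]
  nlinarith [mul_nonneg hc (sq_nonneg a), mul_nonneg ha.le (sq_nonneg c), pow_nonneg hc 3]

lemma sub_limitCoeff_mul {a c : ℝ} (hac : a + c ≠ 0) (G : ℂ) :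
    G - limitCoeff a c * G = limitCoeff c a * G := by
  have : 1 - limitCoeff a c = limitCoeff c a := by
    unfold limitCoeff
    rw [add_comm c]
    field_simp
    ring
  rw [← this]
  push_cast
  ring

lemma tendsto_decompCoeff {a c : ℝ} (hac : a + c ≠ 0) :
    Tendsto (decompCoeff a c) atTop (𝓝 (limitCoeff a c)) := by
  have hlim : Tendsto (fun α => c / (a * c / α + (a + c))) atTop (𝓝 (c / (0 + (a + c)))) :=
    tendsto_const_nhds.div ((tendsto_const_nhds.div_atTop tendsto_id).add tendsto_const_nhds)
      (by simpa using hac)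
  rw [zero_add] at hlim
  refine hlim.congr' ?_
  filter_upwards [eventually_gt_atTop 0] with α hα
  unfold decompCoeff
  field_simp
  ring

lemma tendsto_decompCoeff_mul {ι : Type*} {l : Filter ι} {a c : ℝ} (hac : a + c ≠ 0) {α : ι → ℝ}
    (hα : Tendsto α l atTop) (G : ℂ) :
    Tendsto (fun n => (decompCoeff a c (α n) : ℂ) * G) l (𝓝 (limitCoeff a c * G)) :=
  ((Complex.continuous_ofReal.tendsto _).comp ((tendsto_decompCoeff hac).comp hα)).mul_const G

lemma summable_norm_mul_norm {d : ℕ} {u v : K d → ℂ} (hu : MemL2 u) (hv : MemL2 v) :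
    Summable fun k => ‖u k‖ * ‖v k‖ :=
  .of_nonneg_of_le (fun k => by positivity)
    (fun k => by nlinarith [two_mul_le_add_sq ‖u k‖ ‖v k‖]) ((Summable.add hu hv).mul_left (1 / 2))

lemma tendsto_tsum_conj_mul_of_tendsto {d : ℕ} {ι : Type*} {l : Filter ι} {x : ι → K d → ℂ}
    {y g w : K d → ℂ} (hg : MemL2 g) (hw : MemL2 w)
    (hx : ∀ k, Tendsto (fun n => x n k) l (𝓝 (y k))) (hxg : ∀ n k, ‖x n k‖ ≤ ‖g k‖) :
    Tendsto (fun n => ∑' k, starRingEnd ℂ (w k) * x n k) l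
      (𝓝 (∑' k, starRingEnd ℂ (w k) * y k)) :=
  tendsto_tsum_of_dominated_convergence (summable_norm_mul_norm hw hg)
    (fun k => (hx k).const_mul _)
    (.of_forall fun n k => by
      rw [norm_mul, RCLike.norm_conj]
      exact mul_le_mul_of_nonneg_left (hxg n k) (norm_nonneg _))

section Functionals

variable {d : ℕ} (s₁ s₂ β : ℝ) (g : K d → ℂ)

def decompFunctional (α : ℝ) (u v : K d → ℂ) : ℝ :=
  (1 / 2) * HnormSq s₁ u + (α / 2) * (∑' k, ‖u k + v k - g k‖ ^ 2) + (β / 2) * HnormSq s₂ v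

def IsDecompMinimizer (α : ℝ) (u v : K d → ℂ) : Prop :=
  MemL2 u ∧ MemHs s₁ u ∧ MemL2 v ∧ ∀ w z : K d → ℂ, MemL2 w → MemHs s₁ w → MemL2 z →
    decompFunctional s₁ s₂ β g α u v ≤ decompFunctional s₁ s₂ β g α w z

def limitFunctional (u : K d → ℂ) : ℝ :=
  (1 / 2) * HnormSq s₁ u + (β / 2) * HnormSq s₂ (u - g)

def limitMinimizer : K d → ℂ :=
  fun k => limitCoeff (nrm k ^ (2 * s₁)) (β * nrm k ^ (2 * s₂)) * g k

variable {s₁ s₂ β g}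

lemma hasSum_decompEnergy (α : ℝ) {u v : K d → ℂ} (hu : MemHs s₁ u) (hv : MemHs s₂ v)
    (huvg : MemL2 (u + v - g)) :
    HasSum (fun k => decompEnergy (nrm k ^ (2 * s₁)) (β * nrm k ^ (2 * s₂)) α (g k) (u k) (v k))
      (2 * decompFunctional s₁ s₂ β g α u v) := by
  convert (hu.hasSum.add (huvg.hasSum.mul_left α)).add (hv.hasSum.mul_left β) using 1
  · ext k; simp only [decompEnergy, Pi.add_apply, Pi.sub_apply]; ring
  · simp only [decompFunctional, HnormSq, Pi.add_apply, Pi.sub_apply]; ring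

lemma hasSum_limitEnergy {u : K d → ℂ} (hu : MemHs s₁ u) (hug : MemHs s₂ (u - g)) :
    HasSum (fun k => limitEnergy (nrm k ^ (2 * s₁)) (β * nrm k ^ (2 * s₂)) (g k) (u k))
      (2 * limitFunctional s₁ s₂ β g u) := by
  convert hu.hasSum.add (hug.hasSum.mul_left β) using 1
  · ext k; simp only [limitEnergy, Pi.sub_apply]; ring
  · simp only [limitFunctional, HnormSq]; ring

/-- Compare `(u, v)` with the competitor that differs from it only in the mode `i`. -/
lemma IsDecompMinimizer.decompEnergy_le {α : ℝ} {u v : K d → ℂ}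
    (h : IsDecompMinimizer s₁ s₂ β g α u v) (hs₂ : s₂ ≤ 0) (hg : MemL2 g) (i : K d) (t r : ℂ) :
    decompEnergy (nrm i ^ (2 * s₁)) (β * nrm i ^ (2 * s₂)) α (g i) (u i) (v i) ≤
      decompEnergy (nrm i ^ (2 * s₁)) (β * nrm i ^ (2 * s₂)) α (g i) t r := by
  classical
  obtain ⟨hu, hu₁, hv, hmin⟩ := h
  set w := Function.update u i t
  set z := Function.update v i r
  have hw : MemL2 w := hu.update i t
  have hz : MemL2 z := hv.update i r
  have huv := hasSum_decompEnergy (β := β) α hu₁ (hv.memHs hs₂) ((hu.add hv).sub hg)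
  have hwz := hasSum_decompEnergy (β := β) α (hu₁.update i t) (hz.memHs hs₂) ((hw.add hz).sub hg)
  refine le_of_tsum_le_tsum_update₂ huv.summable i t r ?_
  rw [huv.tsum_eq, hwz.tsum_eq]
  linarith [hmin w z hw (hu₁.update i t) hz]

lemma IsDecompMinimizer.eq_decompCoeff_mul {α : ℝ} {u v : K d → ℂ}
    (h : IsDecompMinimizer s₁ s₂ β g α u v) (hs₂ : s₂ ≤ 0) (hβ : 0 < β) (hg : MemL2 g)
    (hα : 0 ≤ α) (k : K d) :
    u k = decompCoeff (nrm k ^ (2 * s₁)) (β * nrm k ^ (2 * s₂)) α * g k ∧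
      v k = decompCoeff (β * nrm k ^ (2 * s₂)) (nrm k ^ (2 * s₁)) α * g k :=
  eq_decompCoeff_mul_of_forall_le (rpow_nrm_pos k _) (mul_pos hβ (rpow_nrm_pos k _)) hα
    (h.decompEnergy_le hs₂ hg k)

lemma IsDecompMinimizer.norm_le {α : ℝ} {u v : K d → ℂ}
    (h : IsDecompMinimizer s₁ s₂ β g α u v) (hs₂ : s₂ ≤ 0) (hβ : 0 < β) (hg : MemL2 g)
    (hα : 0 ≤ α) (k : K d) : ‖u k‖ ≤ ‖g k‖ ∧ ‖v k‖ ≤ ‖g k‖ := by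
  have ha := (rpow_nrm_pos k (2 * s₁)).le
  have hc := mul_rpow_nrm_nonneg hβ.le k (2 * s₂)
  rw [(h.eq_decompCoeff_mul hs₂ hβ hg hα k).1, (h.eq_decompCoeff_mul hs₂ hβ hg hα k).2]
  exact ⟨norm_ofReal_mul_le (decompCoeff_nonneg ha hc hα) (decompCoeff_le_one ha hc hα) _,
    norm_ofReal_mul_le (decompCoeff_nonneg hc ha hα) (decompCoeff_le_one hc ha hα) _⟩

lemma norm_limitMinimizer_le (hβ : 0 ≤ β) (k : K d) : ‖limitMinimizer s₁ s₂ β g k‖ ≤ ‖g k‖ :=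
  norm_ofReal_mul_le (limitCoeff_nonneg (rpow_nrm_pos k _).le (mul_rpow_nrm_nonneg hβ k _))
    (limitCoeff_le_one (rpow_nrm_pos k _).le (mul_rpow_nrm_nonneg hβ k _)) _

lemma memHs_limitMinimizer (hg : MemHs s₂ g) (hβ : 0 ≤ β) :
    MemHs s₁ (limitMinimizer s₁ s₂ β g) := by
  refine .of_nonneg_of_le (fun k => by have := rpow_nrm_pos k (2 * s₁); positivity)
    (fun k => ?_) (hg.mul_left β)
  have hc := mul_rpow_nrm_nonneg hβ k (2 * s₂)
  calc nrm k ^ (2 * s₁) * ‖limitMinimizer s₁ s₂ β g k‖ ^ 2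
      = nrm k ^ (2 * s₁) * limitCoeff (nrm k ^ (2 * s₁)) (β * nrm k ^ (2 * s₂)) ^ 2
          * ‖g k‖ ^ 2 := by
        rw [limitMinimizer, norm_mul, Complex.norm_of_nonneg
          (limitCoeff_nonneg (rpow_nrm_pos k _).le hc)]
        ring
    _ ≤ β * (nrm k ^ (2 * s₂) * ‖g k‖ ^ 2) := by
        rw [← mul_assoc]
        exact mul_le_mul_of_nonneg_right (mul_limitCoeff_sq_le (rpow_nrm_pos k _) hc) (sq_nonneg _)

lemma memL2_limitMinimizer (hβ : 0 ≤ β) (hg : MemL2 g) : MemL2 (limitMinimizer s₁ s₂ β g) :=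
  hg.of_norm_le (norm_limitMinimizer_le hβ)

lemma hasSum_limitEnergy_of_memL2 (hs₂ : s₂ ≤ 0) (hg : MemL2 g) {w : K d → ℂ} (hw : MemL2 w)
    (hw₁ : MemHs s₁ w) :
    HasSum (fun k => limitEnergy (nrm k ^ (2 * s₁)) (β * nrm k ^ (2 * s₂)) (g k) (w k))
      (2 * limitFunctional s₁ s₂ β g w) :=
  hasSum_limitEnergy hw₁ ((hw.sub hg).memHs hs₂)

lemma hasSum_limitEnergy_limitMinimizer (hs₂ : s₂ ≤ 0) (hβ : 0 ≤ β) (hg : MemL2 g) :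
    HasSum (fun k => limitEnergy (nrm k ^ (2 * s₁)) (β * nrm k ^ (2 * s₂)) (g k)
        (limitMinimizer s₁ s₂ β g k))
      (2 * limitFunctional s₁ s₂ β g (limitMinimizer s₁ s₂ β g)) :=
  hasSum_limitEnergy_of_memL2 hs₂ hg (memL2_limitMinimizer hβ hg)
    (memHs_limitMinimizer (hg.memHs hs₂) hβ)

lemma limitFunctional_limitMinimizer_le (hs₂ : s₂ ≤ 0) (hβ : 0 ≤ β) (hg : MemL2 g)
    {w : K d → ℂ} (hw : MemL2 w) (hw₁ : MemHs s₁ w) :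
    limitFunctional s₁ s₂ β g (limitMinimizer s₁ s₂ β g) ≤ limitFunctional s₁ s₂ β g w := by
  have h := hasSum_le
    (fun k => limitEnergy_limitCoeff_le (rpow_nrm_add_mul_rpow_nrm_pos hβ k _ _) (g k) (w k))
    (hasSum_limitEnergy_limitMinimizer hs₂ hβ hg) (hasSum_limitEnergy_of_memL2 hs₂ hg hw hw₁)
  linarith

lemma eq_limitMinimizer_of_limitFunctional_le (hs₂ : s₂ ≤ 0) (hβ : 0 ≤ β) (hg : MemL2 g)
    {w : K d → ℂ} (hw : MemL2 w) (hw₁ : MemHs s₁ w)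
    (h : limitFunctional s₁ s₂ β g w ≤ limitFunctional s₁ s₂ β g (limitMinimizer s₁ s₂ β g)) :
    w = limitMinimizer s₁ s₂ β g := by
  by_contra hne
  obtain ⟨k, hk⟩ := Function.ne_iff.mp hne
  have hlt := hasSum_lt
    (fun k => limitEnergy_limitCoeff_le (rpow_nrm_add_mul_rpow_nrm_pos hβ k _ _) (g k) (w k))
    (limitEnergy_limitCoeff_lt (rpow_nrm_add_mul_rpow_nrm_pos hβ k _ _) (g k) hk)
    (hasSum_limitEnergy_limitMinimizer hs₂ hβ hg) (hasSum_limitEnergy_of_memL2 hs₂ hg hw hw₁)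
  linarith

end Functionals

theorem stmt_13_general (d : ℕ) (g : K d → ℂ) (hg : MemL2 g)
    (s₁ s₂ β : ℝ) (hs₂ : s₂ ≤ 0) (hβ : 0 < β)
    (αseq : ℕ → ℝ) (hαpos : ∀ n, 0 < αseq n)
    (hαtop : Tendsto αseq atTop atTop)
    (u v : ℕ → K d → ℂ)
    (hmin : ∀ n : ℕ, MemL2 (u n) ∧ MemHs s₁ (u n) ∧ MemL2 (v n) ∧
      ∀ w z : K d → ℂ, MemL2 w → MemHs s₁ w → MemL2 z →
        (1 / 2) * HnormSq s₁ (u n) +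
            (αseq n / 2) * (∑' k : K d, ‖u n k + v n k - g k‖ ^ 2) +
            (β / 2) * HnormSq s₂ (v n)
          ≤ (1 / 2) * HnormSq s₁ w +
            (αseq n / 2) * (∑' k : K d, ‖w k + z k - g k‖ ^ 2) +
            (β / 2) * HnormSq s₂ z) :
    (∃ C : ℝ, ∀ n : ℕ,
      Real.sqrt (∑' k : K d, ‖u n k‖ ^ 2) ≤ C ∧
      Real.sqrt (∑' k : K d, ‖v n k‖ ^ 2) ≤ C) ∧
    ∃ (u₀ : K d → ℂ) (ψ : ℕ → ℕ), StrictMono ψ ∧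
      (∀ w : K d → ℂ, MemL2 w →
        Tendsto (fun n : ℕ => ∑' k : K d, starRingEnd ℂ (w k) * u (ψ n) k) atTop
          (nhds (∑' k : K d, starRingEnd ℂ (w k) * u₀ k))) ∧
      (∀ w : K d → ℂ, MemL2 w →
        Tendsto (fun n : ℕ => ∑' k : K d, starRingEnd ℂ (w k) * v (ψ n) k) atTop
          (nhds (∑' k : K d, starRingEnd ℂ (w k) * (g k - u₀ k)))) ∧
      MemL2 u₀ ∧ MemHs s₁ u₀ ∧
      (∀ w : K d → ℂ, MemL2 w → MemHs s₁ w →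
        (1 / 2) * HnormSq s₁ u₀ + (β / 2) * HnormSq s₂ (u₀ - g)
          ≤ (1 / 2) * HnormSq s₁ w + (β / 2) * HnormSq s₂ (w - g)) ∧
      (∀ w : K d → ℂ, MemL2 w → MemHs s₁ w →
        (∀ z : K d → ℂ, MemL2 z → MemHs s₁ z →
          (1 / 2) * HnormSq s₁ w + (β / 2) * HnormSq s₂ (w - g)
            ≤ (1 / 2) * HnormSq s₁ z + (β / 2) * HnormSq s₂ (z - g)) → w = u₀) := by
  have hdecomp (n : ℕ) : IsDecompMinimizer s₁ s₂ β g (αseq n) (u n) (v n) := hmin n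
  have hcoef (n : ℕ) := (hdecomp n).eq_decompCoeff_mul hs₂ hβ hg (hαpos n).le
  have hle (n : ℕ) := (hdecomp n).norm_le hs₂ hβ hg (hαpos n).le
  set u₀ := limitMinimizer s₁ s₂ β g
  have hac (k : K d) := (rpow_nrm_add_mul_rpow_nrm_pos hβ.le k (2 * s₁) (2 * s₂)).ne'
  have hu_lim (k : K d) : Tendsto (fun n => u n k) atTop (𝓝 (u₀ k)) := by
    rw [funext fun n => (hcoef n k).1]
    exact tendsto_decompCoeff_mul (hac k) hαtop (g k)
  have hv_lim (k : K d) : Tendsto (fun n => v n k) atTop (𝓝 (g k - u₀ k)) := by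
    rw [funext fun n => (hcoef n k).2, show g k - u₀ k = _ from sub_limitCoeff_mul (hac k) (g k)]
    exact tendsto_decompCoeff_mul ((add_comm _ _).trans_ne (hac k)) hαtop (g k)
  refine ⟨⟨√(∑' k, ‖g k‖ ^ 2), fun n => ⟨?_, ?_⟩⟩, u₀, id, strictMono_id,
    fun w hw => tendsto_tsum_conj_mul_of_tendsto hg hw hu_lim fun n k => (hle n k).1,
    fun w hw => tendsto_tsum_conj_mul_of_tendsto hg hw hv_lim fun n k => (hle n k).2,
    memL2_limitMinimizer hβ.le hg, memHs_limitMinimizer (hg.memHs hs₂) hβ.le,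
    fun w hw hw₁ => limitFunctional_limitMinimizer_le hs₂ hβ.le hg hw hw₁,
    fun w hw hw₁ hmin_w => eq_limitMinimizer_of_limitFunctional_le hs₂ hβ.le hg hw hw₁
      (hmin_w u₀ (memL2_limitMinimizer hβ.le hg) (memHs_limitMinimizer (hg.memHs hs₂) hβ.le))⟩
  · exact Real.sqrt_le_sqrt (tsum_sq_norm_le_of_norm_le hg fun k => (hle n k).1)
  · exact Real.sqrt_le_sqrt (tsum_sq_norm_le_of_norm_le hg fun k => (hle n k).2)

/-- limiting behaviour as `α → ∞`. If `(u_n, v_n)` minimizes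
`I_{α_n}(u,v) = ½|u|_{s₁}² + (α_n/2)‖u+v−g‖² + (β/2)|v|_{s₂}²` with `α_n ↑ ∞`, then
`(u_n, v_n)` is bounded in `ℓ² × ℓ²` and a subsequence converges weakly to `(u₀, g − u₀)`,
where `u₀` is the unique minimizer of `Ĩ(u) = ½|u|_{s₁}² + (β/2)|u−g|_{s₂}²`. -/
theorem stmt_13 (d : ℕ) (hd : 1 ≤ d) (g : K d → ℂ) (hg : MemL2 g)
    (s₁ s₂ β : ℝ) (hs₁ : 0 ≤ s₁) (hs₂ : s₂ ≤ 0) (hβ : 0 < β)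
    (αseq : ℕ → ℝ) (hαpos : ∀ n, 0 < αseq n) (hαmono : StrictMono αseq)
    (hαtop : Tendsto αseq atTop atTop)
    (u v : ℕ → K d → ℂ)
    (hmin : ∀ n : ℕ, MemL2 (u n) ∧ MemHs s₁ (u n) ∧ MemL2 (v n) ∧
      ∀ w z : K d → ℂ, MemL2 w → MemHs s₁ w → MemL2 z →
        (1 / 2) * HnormSq s₁ (u n) +
            (αseq n / 2) * (∑' k : K d, ‖u n k + v n k - g k‖ ^ 2) +
            (β / 2) * HnormSq s₂ (v n)
          ≤ (1 / 2) * HnormSq s₁ w +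
            (αseq n / 2) * (∑' k : K d, ‖w k + z k - g k‖ ^ 2) +
            (β / 2) * HnormSq s₂ z) :
    (∃ C : ℝ, ∀ n : ℕ,
      Real.sqrt (∑' k : K d, ‖u n k‖ ^ 2) ≤ C ∧
      Real.sqrt (∑' k : K d, ‖v n k‖ ^ 2) ≤ C) ∧
    ∃ (u₀ : K d → ℂ) (ψ : ℕ → ℕ), StrictMono ψ ∧
      (∀ w : K d → ℂ, MemL2 w →
        Tendsto (fun n : ℕ => ∑' k : K d, starRingEnd ℂ (w k) * u (ψ n) k) atTop
          (nhds (∑' k : K d, starRingEnd ℂ (w k) * u₀ k))) ∧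
      (∀ w : K d → ℂ, MemL2 w →
        Tendsto (fun n : ℕ => ∑' k : K d, starRingEnd ℂ (w k) * v (ψ n) k) atTop
          (nhds (∑' k : K d, starRingEnd ℂ (w k) * (g k - u₀ k)))) ∧
      MemL2 u₀ ∧ MemHs s₁ u₀ ∧
      (∀ w : K d → ℂ, MemL2 w → MemHs s₁ w →
        (1 / 2) * HnormSq s₁ u₀ + (β / 2) * HnormSq s₂ (u₀ - g)
          ≤ (1 / 2) * HnormSq s₁ w + (β / 2) * HnormSq s₂ (w - g)) ∧
      (∀ w : K d → ℂ, MemL2 w → MemHs s₁ w →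
        (∀ z : K d → ℂ, MemL2 z → MemHs s₁ z →
          (1 / 2) * HnormSq s₁ w + (β / 2) * HnormSq s₂ (w - g)
            ≤ (1 / 2) * HnormSq s₁ z + (β / 2) * HnormSq s₂ (z - g)) → w = u₀) :=
  stmt_13_general d g hg s₁ s₂ β hs₂ hβ αseq hαpos hαtop u v hmin
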